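/- Let 1 < p < ∞, Ω ⊂ ℝ^n bounded open, 0 < T < ∞. For each i ∈ ℕ let v_i(x,t) = ξ_i(t) w_i(x) where w_i ∈ C_0^∞(B_{2ρ_i}(x_i), [0,1]) with w_i = 1 on the closed ball B̄_{ρ_i}(x_i), |∇w_i| ≤ 2/ρ_i, B_{2ρ_i}(x_i) ⊂ Ω, and ξ_i ∈ C^∞(ℝ,[0,1]) with ‖ξ_i'‖_{L¹(ℝ)} ≤ 2 and ξ_i = 1 on [t_i − τ_i, t_i]. Then for every k ∈ ℕ the function g = max{v₁,…,v_k} satisfies: ∫∫_{Ω_T}|∇g|^p dx dt ≤ c(n,p) Σ_{i=1}^k τ_i' ρ_i^{n−p}, ess sup_t ∫_Ω g(·,t)² dx ≤ c(n) Σ_{i=1}^k ρ_i^n, and ∫∫_{Ω_T}|∂_t g| dx dt ≤ c(n) Σ_{i=1}^k ρ_i^n, where τ_i' = |{t : ξ_i(t) > 0}|. -/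

import Mathlib

open MeasureTheory Set Metric
open scoped ENNReal

noncomputable section

private lemma iSup_attained {k : ℕ} (hk : 0 < k) (f : Fin k → ℝ) :
    ∃ i, (⨆ j, f j) = f i ∧ ∀ j, f j ≤ f i := by
  haveI : Nonempty (Fin k) := ⟨⟨0, hk⟩⟩
  obtain ⟨i, hi⟩ := Finite.exists_max f
  exact ⟨i, le_antisymm (ciSup_le hi) (le_ciSup (Set.finite_range f).bddAbove i), hi⟩

private lemma fderiv_eq_of_le_of_eq {E : Type*} [NormedAddCommGroup E] [NormedSpace ℝ E]
    {f h : E → ℝ} {y : E} (hle : ∀ z, f z ≤ h z) (heq : f y = h y)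
    (hf : DifferentiableAt ℝ f y) (hh : DifferentiableAt ℝ h y) :
    fderiv ℝ h y = fderiv ℝ f y := by
  have hmin : IsLocalMin (fun z => h z - f z) y :=
    Filter.Eventually.of_forall (fun z => by simp only; rw [← heq]; linarith [hle z])
  have H : HasFDerivAt (fun z => h z - f z) (fderiv ℝ h y - fderiv ℝ f y) y :=
    hh.hasFDerivAt.sub hf.hasFDerivAt
  exact sub_eq_zero.mp (hmin.hasFDerivAt_eq_zero H)

private lemma deriv_eq_of_le_of_eq {f h : ℝ → ℝ} {s : ℝ}
    (hle : ∀ z, f z ≤ h z) (heq : f s = h s)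
    (hf : DifferentiableAt ℝ f s) (hh : DifferentiableAt ℝ h s) :
    deriv h s = deriv f s := by
  have hmin : IsLocalMin (fun z => h z - f z) s :=
    Filter.Eventually.of_forall (fun z => by simp only; rw [← heq]; linarith [hle z])
  have := hmin.deriv_eq_zero
  rw [deriv_fun_sub hh hf] at this
  linarith

/-- Quantitative estimates for the maximum `g = max{v₁,…,v_k}` of cutoff functions
`v_i(x,t) = ξ_i(t) w_i(x)` adapted to space-time cylinders: the gradient, `L²`-slice and
time-derivative quantities of `g` are controlled by `Σ τ_i' ρ_i^{n-p}` and `Σ ρ_i^n`,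
with constants `c(n,p)` resp. `c(n)`; here `τ_i' = |{ξ_i > 0}|`. -/
theorem max_of_cylinder_cutoffs_estimates (n : ℕ) (hn : 1 ≤ n) :
    ∃ cn : ℝ, 0 < cn ∧
      ∀ (p : ℝ), 1 < p →
      ∃ cnp : ℝ, 0 < cnp ∧
        ∀ (Ω : Set (EuclideanSpace ℝ (Fin n))), IsOpen Ω → Bornology.IsBounded Ω →
        ∀ (T : ℝ), 0 < T →
        ∀ (k : ℕ), 0 < k →
        ∀ (x : Fin k → EuclideanSpace ℝ (Fin n)) (ρ τ t : Fin k → ℝ)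
          (w : Fin k → EuclideanSpace ℝ (Fin n) → ℝ) (ξ : Fin k → ℝ → ℝ),
          (∀ i, 0 < ρ i) →
          (∀ i, ball (x i) (2 * ρ i) ⊆ Ω) →
          (∀ i, ContDiff ℝ (⊤ : ℕ∞) (w i)) →
          (∀ i y, w i y ∈ Icc (0 : ℝ) 1) →
          (∀ i, tsupport (w i) ⊆ ball (x i) (2 * ρ i)) →
          (∀ i, ∀ y ∈ closedBall (x i) (ρ i), w i y = 1) →
          (∀ i y, ‖fderiv ℝ (w i) y‖ ≤ 2 / ρ i) →
          (∀ i, ContDiff ℝ (⊤ : ℕ∞) (ξ i)) →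
          (∀ i, HasCompactSupport (ξ i)) →
          (∀ i s, ξ i s ∈ Icc (0 : ℝ) 1) →
          (∀ i, (∫ s, |deriv (ξ i) s|) ≤ 2) →
          (∀ i, ∀ s ∈ Icc (t i - τ i) (t i), ξ i s = 1) →
        ∀ (g : ℝ → EuclideanSpace ℝ (Fin n) → ℝ),
          (∀ s y, g s y = ⨆ i : Fin k, ξ i s * w i y) →
          ((∫ s in Ioo 0 T, ∫ y in Ω, ‖fderiv ℝ (g s) y‖ ^ p)
              ≤ cnp * ∑ i : Fin k,
                  (volume {s : ℝ | 0 < ξ i s}).toReal * ρ i ^ ((n : ℝ) - p)) ∧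
          (∀ s : ℝ, (∫ y in Ω, (g s y) ^ 2) ≤ cn * ∑ i : Fin k, ρ i ^ (n : ℕ)) ∧
          ((∫ s in Ioo 0 T, ∫ y in Ω, |deriv (fun r => g r y) s|)
              ≤ cn * ∑ i : Fin k, ρ i ^ (n : ℕ)) := by
  classical
  set c0 : ℝ := (volume (ball (0 : EuclideanSpace ℝ (Fin n)) 1)).toReal with hc0def
  have hc0pos : 0 < c0 :=
    ENNReal.toReal_pos (measure_ball_pos volume 0 one_pos).ne' measure_ball_lt_top.ne
  refine ⟨2 ^ (n + 1) * c0, mul_pos (by positivity) hc0pos, fun p hp => ?_⟩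
  refine ⟨(2 : ℝ) ^ p * 2 ^ n * c0,
    mul_pos (mul_pos (Real.rpow_pos_of_pos two_pos p) (by positivity)) hc0pos, ?_⟩
  intro Ω hΩo hΩb T hT k hk x ρ τ t w ξ hρ hball hw hw01 hwsupp hw1 hwgrad hξc hξs hξ01
    hξint hξ1 g hg
  haveI : Nonempty (Fin k) := ⟨⟨0, hk⟩⟩
  haveI hΩfin : IsFiniteMeasure (volume.restrict Ω) :=
    ⟨by rw [Measure.restrict_apply_univ]; exact hΩb.measure_lt_top⟩
  haveI hIoofin : IsFiniteMeasure (volume.restrict (Ioo (0:ℝ) T)) :=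
    ⟨by rw [Measure.restrict_apply_univ, Real.volume_Ioo]; exact ENNReal.ofReal_lt_top⟩
  have hpnonneg : (0:ℝ) ≤ p := by linarith
  have hp0 : p ≠ 0 := by linarith
  -- the volume of the ball of radius 2ρ
  set V : Fin k → ℝ := fun j => (volume (ball (x j) (2 * ρ j))).toReal with hVdef
  have hVeq : ∀ j, V j = (2 * ρ j) ^ n * c0 := by
    intro j
    rw [hVdef]
    simp only
    rw [Measure.addHaar_ball_of_pos volume (x j) (by have := hρ j; positivity : (0:ℝ) < 2 * ρ j),
      finrank_euclideanSpace_fin, ENNReal.toReal_mul,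
      ENNReal.toReal_ofReal (by have := hρ j; positivity)]
  have hVnonneg : ∀ j, 0 ≤ V j := fun j => ENNReal.toReal_nonneg
  have hmeasξ : ∀ j, MeasurableSet {s : ℝ | 0 < ξ j s} :=
    fun j => (isOpen_lt continuous_const (hξc j).continuous).measurableSet
  have hξfin : ∀ j, volume {s : ℝ | 0 < ξ j s} < ⊤ := fun j =>
    lt_of_le_of_lt (measure_mono (fun s hs => subset_tsupport _ (ne_of_gt hs)))
      (IsCompact.measure_lt_top (hξs j))
  have hwdiff : ∀ j, Differentiable ℝ (w j) := fun j => (hw j).differentiable (by simp)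
  have hξdiff : ∀ j, Differentiable ℝ (ξ j) := fun j => (hξc j).differentiable (by simp)
  have hattain : ∀ s y, ∃ i, g s y = ξ i s * w i y ∧ ∀ j, ξ j s * w j y ≤ ξ i s * w i y := by
    intro s y
    obtain ⟨i, h1, h2⟩ := iSup_attained hk (fun j => ξ j s * w j y)
    exact ⟨i, by rw [hg]; exact h1, h2⟩
  have hgle : ∀ s y j, ξ j s * w j y ≤ g s y := by
    intro s y j
    rw [hg]
    exact le_ciSup (f := fun j => ξ j s * w j y) (Set.finite_range _).bddAbove j
  -- integrability of indicators of balls over Ω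
  have hIndInt : ∀ (j : Fin k) (c : ℝ),
      Integrable ((ball (x j) (2 * ρ j)).indicator (fun _ => c)) (volume.restrict Ω) :=
    fun j c => (integrable_const c).indicator measurableSet_ball
  have hIndVal : ∀ j : Fin k,
      (∫ y in Ω, (ball (x j) (2 * ρ j)).indicator (fun _ => (1:ℝ)) y) ≤ V j := by
    intro j
    rw [integral_indicator_const (1:ℝ) measurableSet_ball, smul_eq_mul, mul_one,
      measureReal_def, Measure.restrict_apply measurableSet_ball]
    exact ENNReal.toReal_mono measure_ball_lt_top.ne (measure_mono inter_subset_left)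
  have hIndNonneg : ∀ (j : Fin k) (y : EuclideanSpace ℝ (Fin n)),
      0 ≤ (ball (x j) (2 * ρ j)).indicator (fun _ => (1:ℝ)) y :=
    fun j y => Set.indicator_nonneg (fun _ _ => zero_le_one) y
  -- ## Pointwise bound for the spatial gradient
  have P1 : ∀ s y, ‖fderiv ℝ (g s) y‖ ^ p
      ≤ ∑ j : Fin k, ({s' : ℝ | 0 < ξ j s'}.indicator (fun _ => (2 / ρ j) ^ p) s)
          * ((ball (x j) (2 * ρ j)).indicator (fun _ => (1:ℝ)) y) := by
    intro s y
    have hterm : ∀ j : Fin k, 0 ≤ ({s' : ℝ | 0 < ξ j s'}.indicator (fun _ => (2 / ρ j) ^ p) s)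
        * ((ball (x j) (2 * ρ j)).indicator (fun _ => (1:ℝ)) y) := by
      intro j
      refine mul_nonneg (Set.indicator_nonneg (fun _ _ => ?_) s) (hIndNonneg j y)
      exact Real.rpow_nonneg (by have := hρ j; positivity) p
    by_cases hd : DifferentiableAt ℝ (g s) y
    · obtain ⟨i, hieq, hile⟩ := hattain s y
      have hfd : DifferentiableAt ℝ (fun z => ξ i s * w i z) y := ((hwdiff i) y).const_mul _
      have hkey : fderiv ℝ (g s) y = ξ i s • fderiv ℝ (w i) y := by
        rw [fderiv_eq_of_le_of_eq (fun z => hgle s z i) hieq.symm hfd hd]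
        exact fderiv_const_mul ((hwdiff i) y) _
      have hnorm : ‖fderiv ℝ (g s) y‖ = ξ i s * ‖fderiv ℝ (w i) y‖ := by
        rw [hkey, norm_smul, Real.norm_eq_abs, abs_of_nonneg (hξ01 i s).1]
      rw [hnorm]
      refine le_trans ?_ (Finset.single_le_sum (fun j _ => hterm j) (Finset.mem_univ i))
      by_cases hs0 : s ∈ {s' : ℝ | 0 < ξ i s'}
      · by_cases hy : y ∈ ball (x i) (2 * ρ i)
        · rw [Set.indicator_of_mem hs0, Set.indicator_of_mem hy, mul_one]
          refine Real.rpow_le_rpow (mul_nonneg (hξ01 i s).1 (norm_nonneg _)) ?_ hpnonneg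
          calc ξ i s * ‖fderiv ℝ (w i) y‖ ≤ 1 * (2 / ρ i) :=
                mul_le_mul (hξ01 i s).2 (hwgrad i y) (norm_nonneg _) zero_le_one
            _ = 2 / ρ i := one_mul _
        · have hz : fderiv ℝ (w i) y = 0 := by
            by_contra h
            exact hy (hwsupp i (support_fderiv_subset ℝ (Function.mem_support.mpr h)))
          rw [hz, norm_zero, mul_zero, Real.zero_rpow hp0]
          exact hterm i
      · have hz : ξ i s = 0 := le_antisymm (not_lt.mp hs0) (hξ01 i s).1
        rw [hz, zero_mul, Real.zero_rpow hp0]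
        exact hterm i
    · rw [fderiv_zero_of_not_differentiableAt hd, norm_zero, Real.zero_rpow hp0]
      exact Finset.sum_nonneg (fun j _ => hterm j)
  -- ## Pointwise bound for the square
  have P2 : ∀ s y, (g s y) ^ 2
      ≤ ∑ j : Fin k, (ball (x j) (2 * ρ j)).indicator (fun _ => (1:ℝ)) y := by
    intro s y
    obtain ⟨i, hieq, _⟩ := hattain s y
    refine le_trans ?_ (Finset.single_le_sum (fun j _ => hIndNonneg j y) (Finset.mem_univ i))
    by_cases hy : y ∈ ball (x i) (2 * ρ i)
    · rw [Set.indicator_of_mem hy]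
      have h1 : 0 ≤ g s y := hieq ▸ mul_nonneg (hξ01 i s).1 (hw01 i y).1
      have h2 : g s y ≤ 1 := hieq ▸
        (by nlinarith [(hξ01 i s).1, (hξ01 i s).2, (hw01 i y).1, (hw01 i y).2] :
          ξ i s * w i y ≤ 1)
      nlinarith
    · have hz : w i y = 0 := image_eq_zero_of_notMem_tsupport (fun h => hy (hwsupp i h))
      rw [hieq, hz, mul_zero]
      simpa using hIndNonneg i y
  -- ## Pointwise bound for the time derivative
  have P3 : ∀ s y, |deriv (fun r => g r y) s|
      ≤ ∑ j : Fin k, |deriv (ξ j) s| * (ball (x j) (2 * ρ j)).indicator (fun _ => (1:ℝ)) y := by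
    intro s y
    have hterm : ∀ j : Fin k,
        0 ≤ |deriv (ξ j) s| * (ball (x j) (2 * ρ j)).indicator (fun _ => (1:ℝ)) y :=
      fun j => mul_nonneg (abs_nonneg _) (hIndNonneg j y)
    by_cases hd : DifferentiableAt ℝ (fun r => g r y) s
    · obtain ⟨i, hieq, _⟩ := hattain s y
      have hfd : DifferentiableAt ℝ (fun r => ξ i r * w i y) s := ((hξdiff i) s).mul_const _
      have hkey : deriv (fun r => g r y) s = deriv (ξ i) s * w i y := by
        rw [deriv_eq_of_le_of_eq (fun r => hgle r y i) hieq.symm hfd hd]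
        exact deriv_mul_const ((hξdiff i) s) _
      rw [hkey, abs_mul, abs_of_nonneg (hw01 i y).1]
      refine le_trans ?_ (Finset.single_le_sum (fun j _ => hterm j) (Finset.mem_univ i))
      by_cases hy : y ∈ ball (x i) (2 * ρ i)
      · rw [Set.indicator_of_mem hy]
        exact mul_le_mul_of_nonneg_left (hw01 i y).2 (abs_nonneg _)
      · rw [image_eq_zero_of_notMem_tsupport (fun h => hy (hwsupp i h)), mul_zero]
        exact hterm i
    · rw [deriv_zero_of_not_differentiableAt hd, abs_zero]
      exact Finset.sum_nonneg (fun j _ => hterm j)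
  -- ## Part 1: inner integral bound
  have hI1 : ∀ s : ℝ, (∫ y in Ω, ‖fderiv ℝ (g s) y‖ ^ p)
      ≤ ∑ j : Fin k, ({s' : ℝ | 0 < ξ j s'}.indicator (fun _ => (2 / ρ j) ^ p * V j) s) := by
    intro s
    have hdomI : ∀ j : Fin k, Integrable (fun y =>
        ({s' : ℝ | 0 < ξ j s'}.indicator (fun _ => (2 / ρ j) ^ p) s)
          * ((ball (x j) (2 * ρ j)).indicator (fun _ => (1:ℝ)) y)) (volume.restrict Ω) :=
      fun j => (hIndInt j 1).const_mul _
    calc (∫ y in Ω, ‖fderiv ℝ (g s) y‖ ^ p)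
        ≤ ∫ y in Ω, ∑ j : Fin k, ({s' : ℝ | 0 < ξ j s'}.indicator (fun _ => (2 / ρ j) ^ p) s)
            * ((ball (x j) (2 * ρ j)).indicator (fun _ => (1:ℝ)) y) :=
          integral_mono_of_nonneg
            (Filter.Eventually.of_forall fun y => Real.rpow_nonneg (norm_nonneg _) p)
            (integrable_finset_sum _ fun j _ => hdomI j)
            (Filter.Eventually.of_forall fun y => P1 s y)
      _ = ∑ j : Fin k, ∫ y in Ω, ({s' : ℝ | 0 < ξ j s'}.indicator (fun _ => (2 / ρ j) ^ p) s)
            * ((ball (x j) (2 * ρ j)).indicator (fun _ => (1:ℝ)) y) :=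
          integral_finset_sum _ fun j _ => hdomI j
      _ ≤ ∑ j : Fin k, ({s' : ℝ | 0 < ξ j s'}.indicator (fun _ => (2 / ρ j) ^ p * V j) s) := by
          refine Finset.sum_le_sum fun j _ => ?_
          rw [integral_const_mul]
          by_cases hs : s ∈ {s' : ℝ | 0 < ξ j s'}
          · rw [Set.indicator_of_mem hs, Set.indicator_of_mem hs]
            refine mul_le_mul_of_nonneg_left (hIndVal j) ?_
            exact Real.rpow_nonneg (by have := hρ j; positivity) p
          · rw [Set.indicator_of_notMem hs, Set.indicator_of_notMem hs, zero_mul]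
  -- ## Part 1: outer integral bound
  have hO1 : (∫ s in Ioo 0 T, ∫ y in Ω, ‖fderiv ℝ (g s) y‖ ^ p)
      ≤ ∑ j : Fin k, (2 / ρ j) ^ p * V j * (volume {s : ℝ | 0 < ξ j s}).toReal := by
    have hφint : ∀ j : Fin k, Integrable
        ({s' : ℝ | 0 < ξ j s'}.indicator (fun _ => (2 / ρ j) ^ p * V j))
        (volume.restrict (Ioo (0:ℝ) T)) :=
      fun j => (integrable_const _).indicator (hmeasξ j)
    calc (∫ s in Ioo 0 T, ∫ y in Ω, ‖fderiv ℝ (g s) y‖ ^ p)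
        ≤ ∫ s in Ioo 0 T, ∑ j : Fin k,
            ({s' : ℝ | 0 < ξ j s'}.indicator (fun _ => (2 / ρ j) ^ p * V j) s) :=
          integral_mono_of_nonneg
            (Filter.Eventually.of_forall fun s =>
              integral_nonneg fun y => Real.rpow_nonneg (norm_nonneg _) p)
            (integrable_finset_sum _ fun j _ => hφint j)
            (Filter.Eventually.of_forall hI1)
      _ = ∑ j : Fin k, ∫ s in Ioo 0 T,
            ({s' : ℝ | 0 < ξ j s'}.indicator (fun _ => (2 / ρ j) ^ p * V j) s) :=
          integral_finset_sum _ fun j _ => hφint j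
      _ ≤ ∑ j : Fin k, (2 / ρ j) ^ p * V j * (volume {s : ℝ | 0 < ξ j s}).toReal := by
          refine Finset.sum_le_sum fun j _ => ?_
          rw [integral_indicator_const _ (hmeasξ j), measureReal_def, Measure.restrict_apply (hmeasξ j),
            smul_eq_mul]
          have hc : 0 ≤ (2 / ρ j) ^ p * V j :=
            mul_nonneg (Real.rpow_nonneg (by have := hρ j; positivity) p) (hVnonneg j)
          have hm : (volume ({s : ℝ | 0 < ξ j s} ∩ Ioo 0 T)).toReal
              ≤ (volume {s : ℝ | 0 < ξ j s}).toReal :=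
            ENNReal.toReal_mono (hξfin j).ne (measure_mono inter_subset_left)
          calc (volume ({s : ℝ | 0 < ξ j s} ∩ Ioo 0 T)).toReal * ((2 / ρ j) ^ p * V j)
              ≤ (volume {s : ℝ | 0 < ξ j s}).toReal * ((2 / ρ j) ^ p * V j) :=
                mul_le_mul_of_nonneg_right hm hc
            _ = (2 / ρ j) ^ p * V j * (volume {s : ℝ | 0 < ξ j s}).toReal := by ring
  -- algebraic identification of the constant for part 1
  have hAlg1 : ∑ j : Fin k, (2 / ρ j) ^ p * V j * (volume {s : ℝ | 0 < ξ j s}).toReal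
      ≤ ((2:ℝ) ^ p * 2 ^ n * c0) * ∑ i : Fin k,
          (volume {s : ℝ | 0 < ξ i s}).toReal * ρ i ^ ((n : ℝ) - p) := by
    rw [Finset.mul_sum]
    refine Finset.sum_le_sum fun j _ => le_of_eq ?_
    have h1 : (2 / ρ j) ^ p = 2 ^ p / ρ j ^ p := Real.div_rpow (by norm_num) (hρ j).le p
    have h3 : (ρ j) ^ ((n:ℝ) - p) = ρ j ^ (n:ℝ) / ρ j ^ p := Real.rpow_sub (hρ j) _ _
    have h4 : (ρ j) ^ ((n:ℝ)) = ρ j ^ (n:ℕ) := Real.rpow_natCast _ n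
    have h5 : (ρ j : ℝ) ^ p ≠ 0 := (Real.rpow_pos_of_pos (hρ j) p).ne'
    rw [hVeq j, h1, h3, h4, mul_pow]
    field_simp
  -- ## Part 2
  have part2 : ∀ s : ℝ, (∫ y in Ω, (g s y) ^ 2)
      ≤ (2 ^ (n + 1) * c0) * ∑ i : Fin k, ρ i ^ (n : ℕ) := by
    intro s
    calc (∫ y in Ω, (g s y) ^ 2)
        ≤ ∫ y in Ω, ∑ j : Fin k, (ball (x j) (2 * ρ j)).indicator (fun _ => (1:ℝ)) y :=
          integral_mono_of_nonneg (Filter.Eventually.of_forall fun y => sq_nonneg _)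
            (integrable_finset_sum _ fun j _ => hIndInt j 1)
            (Filter.Eventually.of_forall (P2 s))
      _ = ∑ j : Fin k, ∫ y in Ω, (ball (x j) (2 * ρ j)).indicator (fun _ => (1:ℝ)) y :=
          integral_finset_sum _ fun j _ => hIndInt j 1
      _ ≤ ∑ j : Fin k, V j := Finset.sum_le_sum fun j _ => hIndVal j
      _ ≤ (2 ^ (n + 1) * c0) * ∑ i : Fin k, ρ i ^ (n : ℕ) := by
          rw [Finset.mul_sum]
          refine Finset.sum_le_sum fun j _ => ?_
          rw [hVeq j, mul_pow]
          have hA : (0:ℝ) ≤ 2 ^ n * ρ j ^ n * c0 := by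
            have := (hρ j).le; positivity
          rw [pow_succ]
          nlinarith [hA]
  -- ## Part 3
  have hξ'int : ∀ j : Fin k, Integrable (fun s => |deriv (ξ j) s|) volume :=
    fun j => (((hξc j).continuous_deriv (by simp)).integrable_of_hasCompactSupport
      (hξs j).deriv).abs
  have hI3 : ∀ s : ℝ, (∫ y in Ω, |deriv (fun r => g r y) s|)
      ≤ ∑ j : Fin k, |deriv (ξ j) s| * V j := by
    intro s
    have hdomI : ∀ j : Fin k, Integrable (fun y =>
        |deriv (ξ j) s| * (ball (x j) (2 * ρ j)).indicator (fun _ => (1:ℝ)) y)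
        (volume.restrict Ω) := fun j => (hIndInt j 1).const_mul _
    calc (∫ y in Ω, |deriv (fun r => g r y) s|)
        ≤ ∫ y in Ω, ∑ j : Fin k,
            |deriv (ξ j) s| * (ball (x j) (2 * ρ j)).indicator (fun _ => (1:ℝ)) y :=
          integral_mono_of_nonneg (Filter.Eventually.of_forall fun y => abs_nonneg _)
            (integrable_finset_sum _ fun j _ => hdomI j)
            (Filter.Eventually.of_forall (P3 s))
      _ = ∑ j : Fin k, ∫ y in Ω,
            |deriv (ξ j) s| * (ball (x j) (2 * ρ j)).indicator (fun _ => (1:ℝ)) y :=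
          integral_finset_sum _ fun j _ => hdomI j
      _ ≤ ∑ j : Fin k, |deriv (ξ j) s| * V j := by
          refine Finset.sum_le_sum fun j _ => ?_
          rw [integral_const_mul]
          exact mul_le_mul_of_nonneg_left (hIndVal j) (abs_nonneg _)
  have hO3 : (∫ s in Ioo 0 T, ∫ y in Ω, |deriv (fun r => g r y) s|)
      ≤ ∑ j : Fin k, 2 * V j := by
    have hψint : ∀ j : Fin k, Integrable (fun s => |deriv (ξ j) s| * V j)
        (volume.restrict (Ioo (0:ℝ) T)) :=
      fun j => ((hξ'int j).mul_const _).restrict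
    calc (∫ s in Ioo 0 T, ∫ y in Ω, |deriv (fun r => g r y) s|)
        ≤ ∫ s in Ioo 0 T, ∑ j : Fin k, |deriv (ξ j) s| * V j :=
          integral_mono_of_nonneg
            (Filter.Eventually.of_forall fun s => integral_nonneg fun y => abs_nonneg _)
            (integrable_finset_sum _ fun j _ => hψint j)
            (Filter.Eventually.of_forall hI3)
      _ = ∑ j : Fin k, ∫ s in Ioo 0 T, |deriv (ξ j) s| * V j :=
          integral_finset_sum _ fun j _ => hψint j
      _ ≤ ∑ j : Fin k, 2 * V j := by
          refine Finset.sum_le_sum fun j _ => ?_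
          rw [integral_mul_const]
          have h1 : (∫ s in Ioo 0 T, |deriv (ξ j) s|) ≤ ∫ s, |deriv (ξ j) s| :=
            setIntegral_le_integral (hξ'int j)
              (Filter.Eventually.of_forall fun s => abs_nonneg _)
          have h2 : (∫ s in Ioo 0 T, |deriv (ξ j) s|) ≤ 2 := h1.trans (hξint j)
          exact mul_le_mul_of_nonneg_right h2 (hVnonneg j)
  have hAlg3 : ∑ j : Fin k, 2 * V j
      ≤ (2 ^ (n + 1) * c0) * ∑ i : Fin k, ρ i ^ (n : ℕ) := by
    rw [Finset.mul_sum]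
    refine Finset.sum_le_sum fun j _ => le_of_eq ?_
    rw [hVeq j, mul_pow, pow_succ]
    ring
  exact ⟨hO1.trans hAlg1, part2, hO3.trans hAlg3⟩
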